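/- Let n ≥ 1, let U ⊆ ℝⁿ be open, let f : U → ℝ be a C³ function and let u : U → ℝ be a C² function. Then at every point of U, div((Hess f)·∇(u²)) = 2u·⟨∇(Δf), ∇u⟩ + 2u·⟨Hess f, Hess u⟩_F + 2·(∇u)ᵀ·(Hess f)·(∇u). -/

import Mathlib

open scoped BigOperators

/-- Partial derivative `∂ᵢ v` of a scalar function on `ℝⁿ = Fin n → ℝ`. -/
noncomputable def pd {n : ℕ} (i : Fin n) (v : (Fin n → ℝ) → ℝ) (x : Fin n → ℝ) : ℝ :=
  fderiv ℝ v x (Pi.single i 1)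

/-- Gradient `∇v`. -/
noncomputable def grad {n : ℕ} (v : (Fin n → ℝ) → ℝ) (x : Fin n → ℝ) : Fin n → ℝ :=
  fun i => pd i v x

/-- Hessian matrix `(∂ᵢ∂ⱼ v)ᵢⱼ`. -/
noncomputable def hess {n : ℕ} (v : (Fin n → ℝ) → ℝ) (x : Fin n → ℝ) :
    Matrix (Fin n) (Fin n) ℝ :=
  fun i j => pd i (fun y => pd j v y) x

/-- Laplacian `Δv = tr (Hess v)`. -/
noncomputable def lap {n : ℕ} (v : (Fin n → ℝ) → ℝ) (x : Fin n → ℝ) : ℝ :=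
  ∑ i, hess v x i i

/-- Divergence of a vector field. -/
noncomputable def divg {n : ℕ} (X : (Fin n → ℝ) → (Fin n → ℝ)) (x : Fin n → ℝ) : ℝ :=
  ∑ i, pd i (fun y => X y i) x

/-- Euclidean inner product. -/
def dotp {n : ℕ} (a b : Fin n → ℝ) : ℝ := ∑ i, a i * b i

/-- Frobenius inner product of matrices. -/
def frobInner {n : ℕ} (A B : Matrix (Fin n) (Fin n) ℝ) : ℝ := ∑ i, ∑ j, A i j * B i j

/-- Squared Frobenius norm of a matrix. -/
def frobSq {n : ℕ} (A : Matrix (Fin n) (Fin n) ℝ) : ℝ := ∑ i, ∑ j, (A i j) ^ 2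

/-!
Writing `φ = u²`, the product rule gives `div (Hess f · ∇φ) = ∑ᵢⱼ ∂ᵢ∂ᵢ∂ⱼf · ∂ⱼφ + ⟨Hess f, Hess φ⟩_F`,
and by symmetry of third derivatives `∑ᵢ ∂ᵢ∂ᵢ∂ⱼf = ∂ⱼΔf`, so the first term is `⟨∇Δf, ∇φ⟩`.
Substituting `∇φ = 2u∇u` and `Hess φ = 2∇u∇uᵀ + 2u Hess u` gives the three terms of the identity.
-/

section PartialDerivatives

variable {n : ℕ} {U : Set (Fin n → ℝ)} {x : Fin n → ℝ} {v w : (Fin n → ℝ) → ℝ}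

theorem Filter.EventuallyEq.pd_eq (h : v =ᶠ[nhds x] w) (i : Fin n) : pd i v x = pd i w x := by
  rw [pd, pd, h.fderiv_eq]

theorem ContDiffOn.pd {m : WithTop ℕ∞} (hU : IsOpen U) (hv : ContDiffOn ℝ (m + 1) v U)
    (i : Fin n) : ContDiffOn ℝ m (pd i v) U :=
  ((hv.fderivWithin hU.uniqueDiffOn le_rfl).clm_apply contDiffOn_const).congr fun y hy => by
    rw [_root_.pd, fderivWithin_of_isOpen hU hy]

theorem pd_mul (hv : DifferentiableAt ℝ v x) (hw : DifferentiableAt ℝ w x) (i : Fin n) :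
    pd i (fun y => v y * w y) x = pd i v x * w x + v x * pd i w x := by
  simp only [pd, fderiv_fun_mul hv hw, add_apply, smul_apply, smul_eq_mul]
  ring

theorem pd_sum {ι : Type*} (s : Finset ι) {F : ι → (Fin n → ℝ) → ℝ}
    (h : ∀ j ∈ s, DifferentiableAt ℝ (F j) x) (i : Fin n) :
    pd i (fun y => ∑ j ∈ s, F j y) x = ∑ j ∈ s, pd i (F j) x := by
  simp only [pd, fderiv_fun_sum h, sum_apply]

theorem pd_const_mul (hv : DifferentiableAt ℝ v x) (c : ℝ) (i : Fin n) :
    pd i (fun y => c * v y) x = c * pd i v x := by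
  simp only [pd, fderiv_const_mul hv, smul_apply, smul_eq_mul]

theorem pd_sq (hv : DifferentiableAt ℝ v x) (i : Fin n) :
    pd i (fun y => v y ^ 2) x = 2 * v x * pd i v x := by
  simp only [sq, pd_mul hv hv]
  ring

theorem pd_pd_comm (hv : ContDiffAt ℝ 2 v x) (i j : Fin n) :
    pd i (pd j v) x = pd j (pd i v) x := by
  have hd : DifferentiableAt ℝ (fderiv ℝ v) x :=
    (hv.fderiv_right (m := 1) (by norm_num)).differentiableAt one_ne_zero
  have hsnd : ∀ a b : Fin n,
      pd a (pd b v) x = fderiv ℝ (fderiv ℝ v) x (Pi.single a 1) (Pi.single b 1) := by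
    intro a b
    rw [pd, show pd b v = fun y => fderiv ℝ v y (Pi.single b 1) from rfl,
      fderiv_clm_apply hd (differentiableAt_const _)]
    simp
  rw [hsnd, hsnd, hv.isSymmSndFDerivAt (by simp)]

theorem pd_pd_pd_comm (hU : IsOpen U) (hx : x ∈ U) (hv : ContDiffOn ℝ 3 v U) (i j k : Fin n) :
    pd i (pd k (pd j v)) x = pd j (pd i (pd k v)) x := by
  have hv2 : ContDiffOn ℝ 2 v U := hv.of_le (by norm_num)
  have hkj : pd k (pd j v) =ᶠ[nhds x] pd j (pd k v) :=
    Filter.eventually_of_mem (hU.mem_nhds hx) fun y hy =>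
      pd_pd_comm (hv2.contDiffAt (hU.mem_nhds hy)) k j
  rw [hkj.pd_eq, pd_pd_comm ((hv.pd (m := 2) hU k).contDiffAt (hU.mem_nhds hx))]

end PartialDerivatives

section VectorCalculus

variable {n : ℕ} {U : Set (Fin n → ℝ)} {x : Fin n → ℝ}

theorem divg_mulVec {A : (Fin n → ℝ) → Matrix (Fin n) (Fin n) ℝ} {X : (Fin n → ℝ) → Fin n → ℝ}
    (hA : ∀ i j, DifferentiableAt ℝ (fun y => A y i j) x)
    (hX : ∀ j, DifferentiableAt ℝ (fun y => X y j) x) :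
    divg (fun y => (A y).mulVec (X y)) x =
      ∑ i, ∑ j, (pd i (fun y => A y i j) x * X x j + A x i j * pd i (fun y => X y j) x) := by
  refine Finset.sum_congr rfl fun i _ => ?_
  simp only [Matrix.mulVec, dotProduct]
  rw [pd_sum (F := fun j y => A y i j * X y j) _ fun j _ => (hA i j).mul (hX j)]
  exact Finset.sum_congr rfl fun j _ => pd_mul (hA i j) (hX j) i

theorem sum_pd_hess_eq_pd_lap (hU : IsOpen U) (hx : x ∈ U) {f : (Fin n → ℝ) → ℝ}
    (hf : ContDiffOn ℝ 3 f U) (j : Fin n) :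
    ∑ i, pd i (fun y => hess f y i j) x = pd j (lap f) x := by
  have hdiff : ∀ i, DifferentiableAt ℝ (pd i (pd i f)) x := fun i =>
    (((hf.pd (m := 2) hU i).pd (m := 1) hU i).contDiffAt (hU.mem_nhds hx)).differentiableAt
      one_ne_zero
  change ∑ i, pd i (pd i (pd j f)) x = pd j (fun y => ∑ i, pd i (pd i f) y) x
  rw [pd_sum _ fun i _ => hdiff i]
  exact Finset.sum_congr rfl fun i _ => pd_pd_pd_comm hU hx hf i j i

theorem divg_hess_mulVec_grad (hU : IsOpen U) (hx : x ∈ U) {f φ : (Fin n → ℝ) → ℝ}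
    (hf : ContDiffOn ℝ 3 f U) (hφ : ContDiffOn ℝ 2 φ U) :
    divg (fun y => (hess f y).mulVec (grad φ y)) x =
      dotp (grad (lap f) x) (grad φ x) + frobInner (hess f x) (hess φ x) := by
  have hdiff : ∀ {v : (Fin n → ℝ) → ℝ}, ContDiffOn ℝ 1 v U → DifferentiableAt ℝ v x := fun hv =>
    (hv.contDiffAt (hU.mem_nhds hx)).differentiableAt one_ne_zero
  rw [divg_mulVec (A := hess f) (X := grad φ)
    (fun i j => hdiff ((hf.pd (m := 2) hU j).pd (m := 1) hU i))
    (fun j => hdiff (hφ.pd (m := 1) hU j))]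
  simp only [dotp, frobInner, Finset.sum_add_distrib]
  congr 1
  rw [Finset.sum_comm]
  refine Finset.sum_congr rfl fun j _ => ?_
  rw [← Finset.sum_mul, sum_pd_hess_eq_pd_lap hU hx hf]
  rfl

theorem hess_sq (hU : IsOpen U) (hx : x ∈ U) {u : (Fin n → ℝ) → ℝ} (hu : ContDiffOn ℝ 2 u U)
    (i j : Fin n) :
    hess (fun z => u z ^ 2) x i j = 2 * (pd i u x * pd j u x + u x * hess u x i j) := by
  have hdiff : ∀ {v : (Fin n → ℝ) → ℝ}, ContDiffOn ℝ 1 v U → ∀ y ∈ U, DifferentiableAt ℝ v y :=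
    fun hv y hy => (hv.contDiffAt (hU.mem_nhds hy)).differentiableAt one_ne_zero
  have hu1 : ContDiffOn ℝ 1 u U := hu.of_le (by norm_num)
  have hsq : (fun y => pd j (fun z => u z ^ 2) y) =ᶠ[nhds x] fun y => 2 * (u y * pd j u y) :=
    Filter.eventually_of_mem (hU.mem_nhds hx) fun y hy =>
      (pd_sq (hdiff hu1 y hy) j).trans (mul_assoc _ _ _)
  have hdu : DifferentiableAt ℝ u x := hdiff hu1 x hx
  have hduj : DifferentiableAt ℝ (pd j u) x := hdiff (hu.pd (m := 1) hU j) x hx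
  rw [hess, hsq.pd_eq, pd_const_mul (v := fun y => u y * pd j u y) (hdu.mul hduj),
    pd_mul hdu hduj]
  rfl

end VectorCalculus

theorem stmt7_general {n : ℕ} {U : Set (Fin n → ℝ)} (hU : IsOpen U)
    (f u : (Fin n → ℝ) → ℝ)
    (hf : ContDiffOn ℝ 3 f U) (hu : ContDiffOn ℝ 2 u U) :
    ∀ x ∈ U,
      divg (fun y => (hess f y).mulVec (grad (fun z => (u z) ^ 2) y)) x =
        2 * u x * dotp (grad (fun y => lap f y) x) (grad u x)
        + 2 * u x * frobInner (hess f x) (hess u x)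
        + 2 * dotp (grad u x) ((hess f x).mulVec (grad u x)) := by
  intro x hx
  have hdu : DifferentiableAt ℝ u x :=
    (hu.contDiffAt (hU.mem_nhds hx)).differentiableAt (by norm_num)
  rw [divg_hess_mulVec_grad hU hx hf (hu.pow 2)]
  simp only [dotp, frobInner, Matrix.mulVec, dotProduct, grad, pd_sq hdu, hess_sq hU hx hu,
    Finset.mul_sum, ← Finset.sum_add_distrib]
  refine Finset.sum_congr rfl fun i _ => ?_
  rw [add_assoc, ← Finset.sum_add_distrib]
  congr 1
  · ring
  · exact Finset.sum_congr rfl fun j _ => by ring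

theorem stmt7 {n : ℕ} (hn : 1 ≤ n) {U : Set (Fin n → ℝ)} (hU : IsOpen U)
    (f u : (Fin n → ℝ) → ℝ)
    (hf : ContDiffOn ℝ 3 f U) (hu : ContDiffOn ℝ 2 u U) :
    ∀ x ∈ U,
      divg (fun y => (hess f y).mulVec (grad (fun z => (u z) ^ 2) y)) x =
        2 * u x * dotp (grad (fun y => lap f y) x) (grad u x)
        + 2 * u x * frobInner (hess f x) (hess u x)
        + 2 * dotp (grad u x) ((hess f x).mulVec (grad u x)) :=
  stmt7_general hU f u hf hu
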